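/- In SU_q(2), the elements g⁺₁ = α + sβ satisfy: Δ(α + sβ) ≡ (α+sβ) ⊗ (α+sβ) modulo SU_q(2) ⊗ J_s, where J_s = {ξ - s, η + s, ζ}·SU_q(2); equivalently, the image of α + sβ in the quotient coalgebra C_s = SU_q(2)/J_s is a group-like element. -/

import Mathlib

/-!
Expanding the coproducts, `Δ(α + sβ) - (α + sβ) ⊗ (α + sβ) = β ⊗ (γ + sδ - sα - s²β)`,
so it suffices that `γ + sδ - sα - s²β ∈ J_s`. Indeed it equals
`(ξ - s)(-sγ) + (η + s)(-α) + ζ(sα + q⁻²γ)`, which the commutation relations verify.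
-/

open scoped TensorProduct

/-- ξ = s(α² - q⁻¹β²) + (s²-1)q⁻¹αβ -/
def xiE {k A : Type*} [Field k] [Ring A] [Algebra k A] (q s : k) (α β : A) : A :=
  s • (α^2) - (s*q⁻¹) • (β^2) + ((s^2-1)*q⁻¹) • (α*β)

/-- η = s(qγ² - δ²) + (s²-1)γδ -/
def etaE {k A : Type*} [Field k] [Ring A] [Algebra k A] (q s : k) (γ δ : A) : A :=
  (s*q) • (γ^2) - s • (δ^2) + (s^2-1) • (γ*δ)

/-- ζ = s(qαγ - βδ) + (s²-1)qβγ -/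
def zetaE {k A : Type*} [Field k] [Ring A] [Algebra k A] (q s : k) (α β γ δ : A) : A :=
  (s*q) • (α*γ) - s • (β*δ) + ((s^2-1)*q) • (β*γ)

/-- The projector e_s = (1/(1+s²)) [[1-ζ, ξ],[-η, s²+q⁻²ζ]] -/
def esMat {k A : Type*} [Field k] [Ring A] [Algebra k A] (q s : k) (α β γ δ : A) :
    Matrix (Fin 2) (Fin 2) A :=
  (1+s^2)⁻¹ • !![1 - zetaE q s α β γ δ, xiE q s α β;
                 -etaE q s γ δ, (s^2) • (1:A) + (q^2)⁻¹ • zetaE q s α β γ δ]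

/-- The right ideal J_s = {ξ-s, η+s, ζ}·SU_q(2) -/
def Jideal {k A : Type*} [Field k] [Ring A] [Algebra k A] (q s : k) (α β γ δ : A) : Set A :=
  {z | ∃ p₁ p₂ p₃ : A, z = (xiE q s α β - s • 1) * p₁ + (etaE q s γ δ + s • 1) * p₂ +
      zetaE q s α β γ δ * p₃}

lemma mul_eq_inv_smul_of_mul_eq_smul {k A : Type*} [Field k] [Semiring A] [Algebra k A]
    {q : k} (hq : q ≠ 0) {x y : A} (h : x * y = q • (y * x)) : y * x = q⁻¹ • (x * y) := by
  rw [h, smul_smul, inv_mul_cancel₀ hq, one_smul]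

lemma mul_mul_eq_smul_of_mul_eq_smul {R A : Type*} [CommSemiring R] [Semiring A] [Algebra R A]
    {c : R} {x y : A} (z : A) (h : y * x = c • (x * y)) : y * (x * z) = c • (x * (y * z)) := by
  rw [← mul_assoc, h, smul_mul_assoc, mul_assoc]

section SUq2

variable {k A : Type*} [Field k] [Ring A] [Algebra k A]

structure SUq2Relations (q : k) (α β γ δ : A) : Prop where
  α_mul_β : α * β = q • (β * α)
  α_mul_γ : α * γ = q • (γ * α)
  β_mul_γ : β * γ = γ * β
  β_mul_δ : β * δ = q • (δ * β)
  γ_mul_δ : γ * δ = q • (δ * γ)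
  α_mul_δ : α * δ = δ * α + (q - q⁻¹) • (β * γ)
  qdet : α * δ - q • (β * γ) = 1

namespace SUq2Relations

variable {q : k} {α β γ δ : A}

lemma α_mul_δ_eq_one_add (R : SUq2Relations q α β γ δ) : α * δ = 1 + q • (β * γ) := by
  rw [← R.qdet, sub_add_cancel]

lemma δ_mul_α (R : SUq2Relations q α β γ δ) : δ * α = 1 + q⁻¹ • (β * γ) := by
  have h : δ * α = α * δ - (q - q⁻¹) • (β * γ) := by rw [R.α_mul_δ, add_sub_cancel_right]
  rw [h, R.α_mul_δ_eq_one_add, add_sub_assoc, ← sub_smul, sub_sub_cancel]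

lemma mem_Jideal (R : SUq2Relations q α β γ δ) (hq : q ≠ 0) (s : k) :
    γ + s • δ - s • α - s ^ 2 • β ∈ Jideal q s α β γ δ := by
  have βα := mul_eq_inv_smul_of_mul_eq_smul hq R.α_mul_β
  have γα := mul_eq_inv_smul_of_mul_eq_smul hq R.α_mul_γ
  have δβ := mul_eq_inv_smul_of_mul_eq_smul hq R.β_mul_δ
  have δγ := mul_eq_inv_smul_of_mul_eq_smul hq R.γ_mul_δ
  have δα := R.δ_mul_α
  have γβx (x : A) : γ * (β * x) = β * (γ * x) := by rw [← mul_assoc, ← R.β_mul_γ, mul_assoc]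
  refine ⟨-(s • γ), -α, s • α + (q⁻¹ * q⁻¹) • γ, ?_⟩
  -- normal-order every monomial as α^a β^b γ^c δ^d, then compare coefficients
  simp only [xiE, etaE, zetaE, pow_two, mul_add, add_mul, mul_sub, sub_mul,
    smul_mul_assoc, mul_smul_comm, mul_one, one_mul, mul_neg, mul_assoc, γα, δα, δγ,
    mul_mul_eq_smul_of_mul_eq_smul _ βα, mul_mul_eq_smul_of_mul_eq_smul _ γα, mul_mul_eq_smul_of_mul_eq_smul _ δβ, γβx,
    smul_add, smul_smul, smul_sub]
  match_scalars <;> field_simp <;> ring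

end SUq2Relations

lemma map_add_smul_sub_tmul_self {Δ : A →ₗ[k] A ⊗[k] A} {α β γ δ : A} (s : k)
    (hΔα : Δ α = α ⊗ₜ[k] α + β ⊗ₜ[k] γ) (hΔβ : Δ β = α ⊗ₜ[k] β + β ⊗ₜ[k] δ) :
    Δ (α + s • β) - (α + s • β) ⊗ₜ[k] (α + s • β) =
      β ⊗ₜ[k] (γ + s • δ - s • α - s ^ 2 • β) := by
  rw [map_add, map_smul, hΔα, hΔβ]
  simp only [TensorProduct.tmul_add, TensorProduct.add_tmul, TensorProduct.tmul_sub,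
    TensorProduct.tmul_smul, ← TensorProduct.smul_tmul', smul_add]
  module

end SUq2

theorem stmt8_general {k A : Type*} [Field k] [Ring A] [Algebra k A]
    (q s : k) (α β γ δ : A)
    (h1 : α*β = q • (β*α)) (h2 : α*γ = q • (γ*α)) (h3 : β*γ = γ*β)
    (h4 : β*δ = q • (δ*β)) (h5 : γ*δ = q • (δ*γ))
    (h6 : α*δ = δ*α + (q - q⁻¹) • (β*γ)) (h7 : α*δ - q • (β*γ) = 1)
    (hq : q ≠ 0) (Δ : A →ₐ[k] A ⊗[k] A)
    (hΔα : Δ α = α ⊗ₜ[k] α + β ⊗ₜ[k] γ) (hΔβ : Δ β = α ⊗ₜ[k] β + β ⊗ₜ[k] δ) :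
    Δ (α + s • β) - (α + s • β) ⊗ₜ[k] (α + s • β) ∈ Submodule.span k {x : A ⊗[k] A | ∃ p z : A, z ∈ Jideal q s α β γ δ ∧ x = p ⊗ₜ[k] z} := by
  have R : SUq2Relations q α β γ δ := ⟨h1, h2, h3, h4, h5, h6, h7⟩
  rw [← AlgHom.toLinearMap_apply, map_add_smul_sub_tmul_self s hΔα hΔβ]
  exact Submodule.subset_span ⟨β, _, R.mem_Jideal hq s, rfl⟩

theorem stmt8 {k A : Type*} [Field k] [Ring A] [Algebra k A]
    (q s : k) (α β γ δ : A)
    (h1 : α*β = q • (β*α)) (h2 : α*γ = q • (γ*α)) (h3 : β*γ = γ*β)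
    (h4 : β*δ = q • (δ*β)) (h5 : γ*δ = q • (δ*γ))
    (h6 : α*δ = δ*α + (q - q⁻¹) • (β*γ)) (h7 : α*δ - q • (β*γ) = 1)
    (hq : q ≠ 0) (Δ : A →ₐ[k] A ⊗[k] A)
    (hΔα : Δ α = α ⊗ₜ[k] α + β ⊗ₜ[k] γ) (hΔβ : Δ β = α ⊗ₜ[k] β + β ⊗ₜ[k] δ)
    (hΔγ : Δ γ = γ ⊗ₜ[k] α + δ ⊗ₜ[k] γ) (hΔδ : Δ δ = γ ⊗ₜ[k] β + δ ⊗ₜ[k] δ) :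
    Δ (α + s • β) - (α + s • β) ⊗ₜ[k] (α + s • β) ∈ Submodule.span k {x : A ⊗[k] A | ∃ p z : A, z ∈ Jideal q s α β γ δ ∧ x = p ⊗ₜ[k] z} :=
  stmt8_general q s α β γ δ h1 h2 h3 h4 h5 h6 h7 hq Δ hΔα hΔβ
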